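/- Let k ≥ 1, h ≥ 0 be integers, and define for θ ≥ 0 the partition function Z_h(θ) = Σ_{x ∈ {±1}^k} exp(−(θ/2)·(S(x) + h)²) where S(x) = x_1 + ⋯ + x_k. Then for all θ ≥ θ' ≥ 0, Z_h(θ')/Z_{h+2}(θ') ≤ Z_h(θ)/Z_{h+2}(θ); equivalently, the ratio Z_h(θ)/Z_{h+2}(θ) is non-decreasing in θ. -/

import Mathlib

/-- The spin value of a Boolean configuration entry. -/
def spin (b : Bool) : ℝ := if b then 1 else -1

/-- Partition function of the antiferromagnetic Curie–Weiss model with field offset `h`: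
`Z_h(θ) = Σ_{x ∈ {±1}^k} exp(-(θ/2)(S(x) + h)²)` where `S(x) = Σ_i x_i`. -/
noncomputable def cwZ (k : ℕ) (h : ℕ) (θ : ℝ) : ℝ :=
  ∑ x : Fin k → Bool, Real.exp (-(θ / 2) * ((∑ i, spin (x i)) + (h : ℝ)) ^ 2)

/-!
Sorting configurations by `j = S(x) + a`, and flipping all spins, gives
`2 Z_a(θ) = Σ_j H_k(j, a) e^{-θ j²/2}`, where `H_k(j, c)` counts the `±1`-walks of length `k`
started at `c` that end at `j` or `-j`. This kernel is totally positive of order two in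
`(|j|, c)` on each parity class of `c`: induct on `k` with
`H_{k+1}(j, c) = H_k(j, c - 1) + H_k(j, c + 1)`, using `H_k(j, -1) = H_k(j, 1)` at the
boundary `c = 0`. The Gaussian weight `e^{-θ j²/2}` is likewise TP2 in `(θ, |j|)`, with the
opposite orientation. Symmetrising the double sum over `(i, j)` of the product of the two
cross differences (Chebyshev's trick) then gives `Z_h(θ') Z_{h+2}(θ) ≤ Z_h(θ) Z_{h+2}(θ')`.
-/

open Finset

theorem Finset.sum_mul_sum_le_sum_mul_sum_of_cross_nonneg {ι : Type*} (s : Finset ι)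
    (f g u v : ι → ℝ)
    (hcross : ∀ i ∈ s, ∀ j ∈ s, 0 ≤ (f i * g j - f j * g i) * (u i * v j - u j * v i)) :
    (∑ i ∈ s, f i * v i) * (∑ i ∈ s, g i * u i) ≤
      (∑ i ∈ s, f i * u i) * (∑ i ∈ s, g i * v i) := by
  set P : ι → ι → ℝ := fun i j => f i * u i * (g j * v j) - f i * v i * (g j * u j)
  have hP : ∑ i ∈ s, ∑ j ∈ s, P i j = (∑ i ∈ s, f i * u i) * (∑ i ∈ s, g i * v i) -
      (∑ i ∈ s, f i * v i) * (∑ i ∈ s, g i * u i) := by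
    simp only [P, sum_sub_distrib, sum_mul_sum]
  have hsymm : ∑ i ∈ s, ∑ j ∈ s, (f i * g j - f j * g i) * (u i * v j - u j * v i) =
      2 * ∑ i ∈ s, ∑ j ∈ s, P i j := by
    calc _ = ∑ i ∈ s, ∑ j ∈ s, (P i j + P j i) :=
          sum_congr rfl fun i _ => sum_congr rfl fun j _ => by simp only [P]; ring
      _ = ∑ i ∈ s, ∑ j ∈ s, P i j + ∑ i ∈ s, ∑ j ∈ s, P j i := by
          simp only [sum_add_distrib]
      _ = _ := by rw [sum_comm (f := fun i j => P j i), two_mul]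
  have := sum_nonneg fun i hi => sum_nonneg fun j hj => hcross i hi j hj
  linarith

namespace CurieWeiss

def magnetization {k : ℕ} (x : Fin k → Bool) : ℤ := ∑ i, if x i then 1 else -1

def magnetizationCount (k : ℕ) (s : ℤ) : ℕ := #{x : Fin k → Bool | magnetization x = s}

/-- The number of `±1`-walks of length `k` from `c` that end at `j` or at `-j`; those ending at
`j = 0` are counted twice. -/
def foldedCount (k : ℕ) (j c : ℤ) : ℕ :=
  magnetizationCount k (j - c) + magnetizationCount k (j + c)

noncomputable def gaussWeight (θ : ℝ) (j : ℤ) : ℝ := Real.exp (-(θ / 2) * (j : ℝ) ^ 2)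

lemma magnetization_cons {k : ℕ} (b : Bool) (v : Fin k → Bool) :
    magnetization (Fin.cons b v : Fin (k + 1) → Bool) =
      (if b then 1 else -1) + magnetization v := by
  simp [magnetization, Fin.sum_univ_succ]

lemma magnetization_not {k : ℕ} (x : Fin k → Bool) :
    magnetization (fun i => !x i) = -magnetization x := by
  simp only [magnetization, ← sum_neg_distrib]
  exact sum_congr rfl fun i _ => by by_cases h : x i <;> simp [h]

lemma abs_magnetization_le {k : ℕ} (x : Fin k → Bool) : |magnetization x| ≤ k := by
  calc |magnetization x| ≤ ∑ i, |if x i then (1 : ℤ) else -1| := abs_sum_le_sum_abs _ _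
    _ = k := by simp [apply_ite]

lemma cast_magnetization {k : ℕ} (x : Fin k → Bool) :
    (magnetization x : ℝ) = ∑ i, spin (x i) := by
  push_cast [magnetization, spin, apply_ite]
  rfl

lemma magnetizationCount_neg (k : ℕ) (s : ℤ) :
    magnetizationCount k (-s) = magnetizationCount k s := by
  refine card_nbij' (fun x i => !x i) (fun x i => !x i) ?_ ?_ ?_ ?_ <;> intro x <;>
    simp [magnetization_not, neg_eq_iff_eq_neg]

lemma magnetizationCount_zero (s : ℤ) : magnetizationCount 0 s = if s = 0 then 1 else 0 := by
  have hzero : ∀ x : Fin 0 → Bool, magnetization x = 0 := fun x => by simp [magnetization]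
  by_cases hs : s = 0 <;> simp [magnetizationCount, hzero, hs, eq_comm]

lemma magnetizationCount_succ (k : ℕ) (s : ℤ) :
    magnetizationCount (k + 1) s = magnetizationCount k (s - 1) + magnetizationCount k (s + 1) := by
  simp only [magnetizationCount, card_filter]
  rw [← (Fin.consEquiv fun _ => Bool).sum_comp, Fintype.sum_prod_type, Fintype.sum_bool]
  congr 1 <;> refine sum_congr rfl fun v _ => if_congr ?_ rfl rfl <;>
    simp [Fin.consEquiv, magnetization_cons] <;> omega

lemma foldedCount_neg_right (k : ℕ) (j c : ℤ) : foldedCount k j (-c) = foldedCount k j c := by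
  rw [foldedCount, foldedCount, sub_neg_eq_add, ← sub_eq_add_neg, add_comm]

lemma foldedCount_neg_left (k : ℕ) (j c : ℤ) : foldedCount k (-j) c = foldedCount k j c := by
  rw [foldedCount, foldedCount, show -j - c = -(j + c) by ring, show -j + c = -(j - c) by ring,
    magnetizationCount_neg, magnetizationCount_neg, add_comm]

lemma foldedCount_succ (k : ℕ) (j c : ℤ) :
    foldedCount (k + 1) j c = foldedCount k j (c - 1) + foldedCount k j (c + 1) := by
  simp only [foldedCount, magnetizationCount_succ]
  rw [show j - c - 1 = j - (c + 1) by ring, show j - c + 1 = j - (c - 1) by ring,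
    show j + c - 1 = j + (c - 1) by ring, show j + c + 1 = j + (c + 1) by ring]
  ring

theorem foldedCount_mul_le_mul {j l : ℤ} (hj : 0 ≤ j) (hjl : j ≤ l) (k : ℕ) {c c' : ℤ}
    (hc : 0 ≤ c) (hcc' : c ≤ c') (hpar : 2 ∣ c' - c) :
    foldedCount k j c' * foldedCount k l c ≤ foldedCount k j c * foldedCount k l c' := by
  induction k generalizing c c' with
  | zero =>
    simp only [foldedCount, magnetizationCount_zero]
    split_ifs <;> omega
  | succ k ih =>
    obtain rfl | hlt := hcc'.eq_or_lt
    · exact le_rfl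
    have ih' : ∀ b a : ℤ, -1 ≤ b → b ≤ a → 1 ≤ a → 2 ∣ a - b →
        foldedCount k j a * foldedCount k l b ≤ foldedCount k j b * foldedCount k l a := by
      intro b a hb hba ha hab
      obtain rfl | hb := hb.eq_or_lt
      · rw [foldedCount_neg_right, foldedCount_neg_right]
        exact ih zero_le_one ha (by omega)
      · exact ih (by omega) hba hab
    have := ih' (c - 1) (c' - 1) (by omega) (by omega) (by omega) (by omega)
    have := ih' (c - 1) (c' + 1) (by omega) (by omega) (by omega) (by omega)
    have := ih' (c + 1) (c' - 1) (by omega) (by omega) (by omega) (by omega)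
    have := ih' (c + 1) (c' + 1) (by omega) (by omega) (by omega) (by omega)
    simp only [foldedCount_succ, add_mul, mul_add]
    linarith

lemma foldedCount_abs (k : ℕ) (j c : ℤ) : foldedCount k |j| c = foldedCount k j c := by
  rcases abs_choice j with h | h <;> rw [h]
  exact foldedCount_neg_left k j c

lemma sum_comp_magnetization_add {k : ℕ} (f : ℤ → ℝ) (a : ℤ) {T : Finset ℤ}
    (hT : ∀ x : Fin k → Bool, magnetization x + a ∈ T) :
    ∑ x : Fin k → Bool, f (magnetization x + a) =
      ∑ j ∈ T, magnetizationCount k (j - a) * f j := by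
  rw [← sum_fiberwise_of_maps_to' (fun x _ => hT x)]
  refine sum_congr rfl fun j _ => ?_
  rw [sum_const, nsmul_eq_mul, magnetizationCount]
  congr 3
  ext x
  simp only [mem_filter, mem_univ, true_and]
  omega

lemma gaussWeight_neg (θ : ℝ) (j : ℤ) : gaussWeight θ (-j) = gaussWeight θ j := by
  simp [gaussWeight]

lemma gaussWeight_mul_le {θ θ' : ℝ} (hθ : θ' ≤ θ) {i j : ℤ} (hij : |i| ≤ |j|) :
    gaussWeight θ j * gaussWeight θ' i ≤ gaussWeight θ i * gaussWeight θ' j := by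
  have hsq : (i : ℝ) ^ 2 ≤ (j : ℝ) ^ 2 := sq_le_sq.2 (by exact_mod_cast hij)
  simp only [gaussWeight, ← Real.exp_add, Real.exp_le_exp]
  nlinarith [mul_le_mul_of_nonneg_left hsq (sub_nonneg.2 hθ)]

lemma foldedCount_gaussWeight_cross_nonneg (k : ℕ) {c : ℤ} (hc : 0 ≤ c) {θ θ' : ℝ}
    (hθ : θ' ≤ θ) (i j : ℤ) :
    0 ≤ ((foldedCount k i c : ℝ) * foldedCount k j (c + 2) -
        foldedCount k j c * foldedCount k i (c + 2)) *
      (gaussWeight θ i * gaussWeight θ' j - gaussWeight θ j * gaussWeight θ' i) := by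
  wlog hij : |i| ≤ |j| generalizing i j
  · calc _ ≤ _ := this j i (le_of_not_ge hij)
      _ = _ := by ring
  have hcount := foldedCount_mul_le_mul (abs_nonneg i) hij k hc (by omega)
    (by omega : 2 ∣ c + 2 - c)
  rw [foldedCount_abs, foldedCount_abs, foldedCount_abs, foldedCount_abs] at hcount
  have hcount' : (foldedCount k i (c + 2) * foldedCount k j c : ℝ) ≤
      foldedCount k i c * foldedCount k j (c + 2) := by exact_mod_cast hcount
  have hgauss := gaussWeight_mul_le hθ hij
  exact mul_nonneg (by linarith) (by linarith)

lemma cwZ_eq_sum_gaussWeight (k a : ℕ) (θ : ℝ) :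
    cwZ k a θ = ∑ x : Fin k → Bool, gaussWeight θ (magnetization x + a) := by
  simp [cwZ, gaussWeight, cast_magnetization]

lemma cwZ_eq_sum_gaussWeight_sub (k a : ℕ) (θ : ℝ) :
    cwZ k a θ = ∑ x : Fin k → Bool, gaussWeight θ (magnetization x - a) := by
  rw [cwZ_eq_sum_gaussWeight, ← (Equiv.arrowCongr (Equiv.refl _) Equiv.boolNot).sum_comp]
  refine sum_congr rfl fun x _ => ?_
  rw [← gaussWeight_neg θ (_ - _), neg_sub]
  change gaussWeight θ (magnetization (fun i => !x i) + a) = _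
  rw [magnetization_not, neg_add_eq_sub]

lemma two_mul_cwZ (k a : ℕ) (θ : ℝ) {M : ℕ} (hM : k + a ≤ M) :
    2 * cwZ k a θ = ∑ j ∈ Icc (-M : ℤ) M, foldedCount k j a * gaussWeight θ j := by
  have hT : ∀ b : ℤ, |b| ≤ a → ∀ x : Fin k → Bool,
      magnetization x + b ∈ Icc (-M : ℤ) M := by
    intro b hb x
    have := abs_le.1 (abs_magnetization_le x)
    have := abs_le.1 hb
    rw [mem_Icc]
    omega
  rw [two_mul]
  nth_rw 1 [cwZ_eq_sum_gaussWeight]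
  simp only [cwZ_eq_sum_gaussWeight_sub, sub_eq_add_neg]
  rw [sum_comp_magnetization_add _ _ (hT a (by simp)),
    sum_comp_magnetization_add _ _ (hT (-a) (by simp)), ← sum_add_distrib]
  refine sum_congr rfl fun j _ => ?_
  rw [foldedCount, sub_neg_eq_add]
  push_cast
  ring

lemma cwZ_pos (k a : ℕ) (θ : ℝ) : 0 < cwZ k a θ :=
  sum_pos (fun _ _ => Real.exp_pos _) univ_nonempty

end CurieWeiss

open CurieWeiss in
theorem cw_partition_ratio_mono_general (k h : ℕ) (θ θ' : ℝ) (h1 : θ' ≤ θ) :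
    cwZ k h θ' / cwZ k (h + 2) θ' ≤ cwZ k h θ / cwZ k (h + 2) θ := by
  rw [div_le_div_iff₀ (cwZ_pos k (h + 2) θ') (cwZ_pos k (h + 2) θ)]
  have hcheb := sum_mul_sum_le_sum_mul_sum_of_cross_nonneg
    (Icc (-(k + h + 2 : ℕ) : ℤ) (k + h + 2 : ℕ))
    (fun j => (foldedCount k j h : ℝ)) (fun j => (foldedCount k j (h + 2) : ℝ))
    (gaussWeight θ) (gaussWeight θ')
    fun i _ j _ => foldedCount_gaussWeight_cross_nonneg k (Int.natCast_nonneg h) h1 i j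
  have hZ := fun θ => two_mul_cwZ k h θ (M := k + h + 2) (by omega)
  have hZ₂ := fun θ => two_mul_cwZ k (h + 2) θ (M := k + h + 2) le_rfl
  push_cast at hZ hZ₂ hcheb
  rw [← hZ, ← hZ, ← hZ₂, ← hZ₂] at hcheb
  linarith

/-- Monotonicity of the partition function ratio: for `θ ≥ θ' ≥ 0`,
`Z_h(θ')/Z_{h+2}(θ') ≤ Z_h(θ)/Z_{h+2}(θ)`. -/
theorem cw_partition_ratio_mono (k h : ℕ) (hk : 1 ≤ k) (θ θ' : ℝ)
    (h0 : 0 ≤ θ') (h1 : θ' ≤ θ) :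
    cwZ k h θ' / cwZ k (h + 2) θ' ≤ cwZ k h θ / cwZ k (h + 2) θ :=
  cw_partition_ratio_mono_general k h θ θ' h1
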